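/- For an integer a ≥ 1 let P_a(N) := 1 + (4a⁴+16a³-11a²-54a-34)·N - (108a⁶+648a⁵+1440a⁴+1440a³+614a²+76a-1)·N² + a(a+2)·N³. Then P_a has three real zeros C₃(a) < C₂(a) < C₁(a), and they satisfy -1/(4a²(a+2)²) < C₃(a) < 0 < C₂(a) < 1/(27a(a+2)) and 108a²(a+1)² < C₁(a); moreover, for a ≥ 2 one also has C₂(a) > 1/(4a²(a+2)²) > |C₃(a)|. -/
import Mathlib


/-- The indicial cubic `P_a(N)`. -/
def salP (a : ℕ) (N : ℝ) : ℝ :=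
  1 + (4 * (a : ℝ) ^ 4 + 16 * (a : ℝ) ^ 3 - 11 * (a : ℝ) ^ 2 - 54 * (a : ℝ) - 34) * N
    - (108 * (a : ℝ) ^ 6 + 648 * (a : ℝ) ^ 5 + 1440 * (a : ℝ) ^ 4 + 1440 * (a : ℝ) ^ 3
        + 614 * (a : ℝ) ^ 2 + 76 * (a : ℝ) - 1) * N ^ 2
    + (a : ℝ) * ((a : ℝ) + 2) * N ^ 3

/-- Real-parameter version of `salP`. -/
def salQ (x N : ℝ) : ℝ :=
  1 + (4 * x ^ 4 + 16 * x ^ 3 - 11 * x ^ 2 - 54 * x - 34) * N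
    - (108 * x ^ 6 + 648 * x ^ 5 + 1440 * x ^ 4 + 1440 * x ^ 3
        + 614 * x ^ 2 + 76 * x - 1) * N ^ 2
    + x * (x + 2) * N ^ 3

lemma salP_eq_salQ (a : ℕ) (N : ℝ) : salP a N = salQ (a : ℝ) N := rfl

lemma salQ_cont (x : ℝ) : Continuous (fun N => salQ x N) := by
  unfold salQ; fun_prop

lemma salQ_zero (x : ℝ) : salQ x 0 = 1 := by simp [salQ]

lemma hd_pos {x : ℝ} (hx : 1 ≤ x) : (0:ℝ) < 4 * x ^ 2 * (x + 2) ^ 2 := by nlinarith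

lemma he_pos {x : ℝ} (hx : 1 ≤ x) : (0:ℝ) < 27 * x * (x + 2) := by nlinarith

/-- `salQ x (-1/(4x²(x+2)²)) < 0` for `x ≥ 1`. -/
lemma lem1 {x : ℝ} (hx : 1 ≤ x) : salQ x (-(1 / (4 * x ^ 2 * (x + 2) ^ 2))) < 0 := by
  have hd := hd_pos hx
  have hu : (0:ℝ) ≤ x - 1 := by linarith
  have key : salQ x (-(1 / (4 * x ^ 2 * (x + 2) ^ 2))) * (4 * x ^ 2 * (x + 2) ^ 2) ^ 3
      = -(6663 + 30148*(x-1) + 57009*(x-1)^2 + 59040*(x-1)^3 + 37012*(x-1)^4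
          + 14624*(x-1)^5 + 3608*(x-1)^6 + 512*(x-1)^7 + 32*(x-1)^8) := by
    unfold salQ
    field_simp
    ring
  have hneg : salQ x (-(1 / (4 * x ^ 2 * (x + 2) ^ 2))) * (4 * x ^ 2 * (x + 2) ^ 2) ^ 3 < 0 := by
    rw [key]
    nlinarith [pow_nonneg hu 2, pow_nonneg hu 3, pow_nonneg hu 4, pow_nonneg hu 5,
      pow_nonneg hu 6, pow_nonneg hu 7, pow_nonneg hu 8]
  by_contra h
  push_neg at h
  nlinarith [mul_nonneg h (pow_pos hd 3).le]

/-- `salQ x (1/(27x(x+2))) < 0` for `x ≥ 1`. -/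
lemma lem2 {x : ℝ} (hx : 1 ≤ x) : salQ x (1 / (27 * x * (x + 2))) < 0 := by
  have hd := he_pos hx
  have hu : (0:ℝ) ≤ x - 1 := by linarith
  have key : salQ x (1 / (27 * x * (x + 2))) * (27 * x * (x + 2)) ^ 3
      = -(337200 + 1039280*(x-1) + 1232684*(x-1)^2 + 735264*(x-1)^3 + 247428*(x-1)^4
          + 46656*(x-1)^5 + 3888*(x-1)^6) := by
    unfold salQ
    field_simp
    ring
  have hneg : salQ x (1 / (27 * x * (x + 2))) * (27 * x * (x + 2)) ^ 3 < 0 := by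
    rw [key]
    nlinarith [pow_nonneg hu 2, pow_nonneg hu 3, pow_nonneg hu 4, pow_nonneg hu 5,
      pow_nonneg hu 6]
  by_contra h
  push_neg at h
  nlinarith [mul_nonneg h (pow_pos hd 3).le]

/-- `salQ x (108x²(x+1)²) < 0` for `x ≥ 1`. -/
lemma lem3 {x : ℝ} (hx : 1 ≤ x) : salQ x (108 * x ^ 2 * (x + 1) ^ 2) < 0 := by
  have hu : (0:ℝ) ≤ x - 1 := by linarith
  have key : salQ x (108 * x ^ 2 * (x + 1) ^ 2)
      = -(565318223 + 5193853488*(x-1) + 21784999572*(x-1)^2 + 55218377592*(x-1)^3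
          + 94343230008*(x-1)^4 + 114714465192*(x-1)^5 + 102111988500*(x-1)^6
          + 67365799200*(x-1)^7 + 32936954400*(x-1)^8 + 11787078528*(x-1)^9
          + 3001077216*(x-1)^10 + 514802304*(x-1)^11 + 53327808*(x-1)^12
          + 2519424*(x-1)^13) := by
    unfold salQ
    ring
  rw [key]
  nlinarith [pow_nonneg hu 2, pow_nonneg hu 3, pow_nonneg hu 4, pow_nonneg hu 5,
    pow_nonneg hu 6, pow_nonneg hu 7, pow_nonneg hu 8, pow_nonneg hu 9,
    pow_nonneg hu 10, pow_nonneg hu 11, pow_nonneg hu 12, pow_nonneg hu 13]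

/-- The big point where the cubic is positive. -/
noncomputable def salBig (x : ℝ) : ℝ :=
  108 * x ^ 6 + 648 * x ^ 5 + 1440 * x ^ 4 + 1440 * x ^ 3 + 614 * x ^ 2 + 76 * x - 1

/-- `salQ x (salBig x) > 0` for `x ≥ 1`. -/
lemma lem4 {x : ℝ} (hx : 1 ≤ x) : 0 < salQ x (salBig x) := by
  have hu : (0:ℝ) ≤ x - 1 := by linarith
  have key : salQ x (salBig x)
      = 161803314576 + 2037639884112*(x-1) + 11993944038740*(x-1)^2
        + 43907826768640*(x-1)^3 + 112187339106976*(x-1)^4 + 212775562734944*(x-1)^5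
        + 310963389555912*(x-1)^6 + 358750090418816*(x-1)^7 + 331951862300840*(x-1)^8
        + 248875300455552*(x-1)^9 + 152066638675872*(x-1)^10 + 75882083402880*(x-1)^11
        + 30880114210224*(x-1)^12 + 10195812429120*(x-1)^13 + 2705451118128*(x-1)^14
        + 568236487680*(x-1)^15 + 92281952160*(x-1)^16 + 11171126016*(x-1)^17
        + 948563136*(x-1)^18 + 50388480*(x-1)^19 + 1259712*(x-1)^20 := by
    unfold salQ salBig
    ring
  rw [key]
  nlinarith [pow_nonneg hu 2, pow_nonneg hu 3, pow_nonneg hu 4, pow_nonneg hu 5,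
    pow_nonneg hu 6, pow_nonneg hu 7, pow_nonneg hu 8, pow_nonneg hu 9,
    pow_nonneg hu 10, pow_nonneg hu 11, pow_nonneg hu 12, pow_nonneg hu 13,
    pow_nonneg hu 14, pow_nonneg hu 15, pow_nonneg hu 16, pow_nonneg hu 17,
    pow_nonneg hu 18, pow_nonneg hu 19, pow_nonneg hu 20]

/-- `108x²(x+1)² < salBig x` for `x ≥ 1`. -/
lemma lem_MB {x : ℝ} (hx : 1 ≤ x) : 108 * x ^ 2 * (x + 1) ^ 2 < salBig x := by
  have hu : (0:ℝ) ≤ x - 1 := by linarith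
  have key : salBig x - 108 * x ^ 2 * (x + 1) ^ 2
      = 3893 + 13976*(x-1) + 20270*(x-1)^2 + 15192*(x-1)^3 + 6192*(x-1)^4
        + 1296*(x-1)^5 + 108*(x-1)^6 := by
    unfold salBig; ring
  nlinarith [pow_nonneg hu 2, pow_nonneg hu 3, pow_nonneg hu 4, pow_nonneg hu 5,
    pow_nonneg hu 6]

/-- `salQ x (1/(4x²(x+2)²)) > 0` for `x ≥ 2`. -/
lemma lem5 {x : ℝ} (hx : 2 ≤ x) : 0 < salQ x (1 / (4 * x ^ 2 * (x + 2) ^ 2)) := by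
  have hd := hd_pos (by linarith : (1:ℝ) ≤ x)
  have hv : (0:ℝ) ≤ x - 2 := by linarith
  have key : salQ x (1 / (4 * x ^ 2 * (x + 2) ^ 2)) * (4 * x ^ 2 * (x + 2) ^ 2) ^ 3
      = 577800 + 30889350*(x-2) + 113397201*(x-2)^2 + 191984880*(x-2)^3
        + 193969060*(x-2)^4 + 129389904*(x-2)^5 + 59743336*(x-2)^6
        + 19469568*(x-2)^7 + 4476320*(x-2)^8 + 711360*(x-2)^9 + 74400*(x-2)^10
        + 4608*(x-2)^11 + 128*(x-2)^12 := by
    unfold salQ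
    field_simp
    ring
  have hpos : 0 < salQ x (1 / (4 * x ^ 2 * (x + 2) ^ 2)) * (4 * x ^ 2 * (x + 2) ^ 2) ^ 3 := by
    rw [key]
    nlinarith [pow_nonneg hv 2, pow_nonneg hv 3, pow_nonneg hv 4, pow_nonneg hv 5,
      pow_nonneg hv 6, pow_nonneg hv 7, pow_nonneg hv 8, pow_nonneg hv 9,
      pow_nonneg hv 10, pow_nonneg hv 11, pow_nonneg hv 12]
  by_contra h
  push_neg at h
  nlinarith [mul_nonpos_of_nonpos_of_nonneg h (pow_pos hd 3).le]

theorem salP_roots (a : ℕ) (ha : 1 ≤ a) :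
    ∃ C₁ C₂ C₃ : ℝ, C₃ < C₂ ∧ C₂ < C₁ ∧
      salP a C₁ = 0 ∧ salP a C₂ = 0 ∧ salP a C₃ = 0 ∧
      (∀ x : ℝ, salP a x = 0 → x = C₁ ∨ x = C₂ ∨ x = C₃) ∧
      -(1 / (4 * (a : ℝ) ^ 2 * ((a : ℝ) + 2) ^ 2)) < C₃ ∧ C₃ < 0 ∧
      0 < C₂ ∧ C₂ < 1 / (27 * (a : ℝ) * ((a : ℝ) + 2)) ∧
      108 * (a : ℝ) ^ 2 * ((a : ℝ) + 1) ^ 2 < C₁ ∧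
      (2 ≤ a → 1 / (4 * (a : ℝ) ^ 2 * ((a : ℝ) + 2) ^ 2) < C₂ ∧
        |C₃| < 1 / (4 * (a : ℝ) ^ 2 * ((a : ℝ) + 2) ^ 2)) := by
  have hx : (1:ℝ) ≤ (a:ℝ) := by exact_mod_cast ha
  set x : ℝ := (a : ℝ) with hxdef
  have hd := hd_pos hx
  have he := he_pos hx
  have hcont : ContinuousOn (fun N => salQ x N) (Set.univ) := (salQ_cont x).continuousOn
  -- root C₃ in (-(1/d), 0)
  obtain ⟨C₃, hC₃mem, hC₃⟩ : ∃ r ∈ Set.Ioo (-(1 / (4 * x ^ 2 * (x + 2) ^ 2))) (0:ℝ),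
      salQ x r = 0 := by
    have h := intermediate_value_Ioo
      (le_of_lt (neg_lt_zero.mpr (one_div_pos.mpr hd)))
      ((salQ_cont x).continuousOn (s := Set.Icc _ _))
    have hmem : (0:ℝ) ∈ Set.Ioo (salQ x (-(1 / (4 * x ^ 2 * (x + 2) ^ 2)))) (salQ x 0) := by
      constructor
      · exact lem1 hx
      · rw [salQ_zero]; norm_num
    obtain ⟨r, hr, hr0⟩ := h hmem
    exact ⟨r, hr, hr0⟩
  -- root C₂ in (0, 1/(27x(x+2)))
  obtain ⟨C₂, hC₂mem, hC₂⟩ : ∃ r ∈ Set.Ioo (0:ℝ) (1 / (27 * x * (x + 2))),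
      salQ x r = 0 := by
    have h := intermediate_value_Ioo'
      (le_of_lt (one_div_pos.mpr he))
      ((salQ_cont x).continuousOn (s := Set.Icc _ _))
    have hmem : (0:ℝ) ∈ Set.Ioo (salQ x (1 / (27 * x * (x + 2)))) (salQ x 0) := by
      constructor
      · exact lem2 hx
      · rw [salQ_zero]; norm_num
    obtain ⟨r, hr, hr0⟩ := h hmem
    exact ⟨r, hr, hr0⟩
  -- root C₁ in (108x²(x+1)², salBig x)
  obtain ⟨C₁, hC₁mem, hC₁⟩ : ∃ r ∈ Set.Ioo (108 * x ^ 2 * (x + 1) ^ 2) (salBig x),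
      salQ x r = 0 := by
    have h := intermediate_value_Ioo (le_of_lt (lem_MB hx))
      ((salQ_cont x).continuousOn (s := Set.Icc _ _))
    have hmem : (0:ℝ) ∈ Set.Ioo (salQ x (108 * x ^ 2 * (x + 1) ^ 2)) (salQ x (salBig x)) :=
      ⟨lem3 hx, lem4 hx⟩
    obtain ⟨r, hr, hr0⟩ := h hmem
    exact ⟨r, hr, hr0⟩
  obtain ⟨h3l, h3r⟩ := hC₃mem
  obtain ⟨h2l, h2r⟩ := hC₂mem
  obtain ⟨h1l, h1r⟩ := hC₁mem
  -- ordering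
  have hsle : 1 / (27 * x * (x + 2)) ≤ 1 := by
    rw [div_le_one he]; nlinarith
  have hMgt : (1:ℝ) < 108 * x ^ 2 * (x + 1) ^ 2 := by nlinarith
  have h32 : C₃ < C₂ := lt_trans h3r h2l
  have h21 : C₂ < C₁ := by linarith
  -- factorization / uniqueness
  have hne12 : C₁ - C₂ ≠ 0 := sub_ne_zero.mpr (ne_of_gt h21)
  have hne13 : C₁ - C₃ ≠ 0 := sub_ne_zero.mpr (ne_of_gt (lt_trans h32 h21))
  have hne23 : C₂ - C₃ ≠ 0 := sub_ne_zero.mpr (ne_of_gt h32)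
  obtain ⟨α, β, γ, hexp⟩ : ∃ α β γ : ℝ, ∀ z : ℝ,
      salQ x z = x * (x + 2) * ((z - C₁) * ((z - C₂) * (z - C₃))) + (α * z ^ 2 + β * z + γ) :=
    ⟨-(108 * x ^ 6 + 648 * x ^ 5 + 1440 * x ^ 4 + 1440 * x ^ 3 + 614 * x ^ 2 + 76 * x - 1)
        + x * (x + 2) * (C₁ + C₂ + C₃),
     (4 * x ^ 4 + 16 * x ^ 3 - 11 * x ^ 2 - 54 * x - 34)
        - x * (x + 2) * (C₁ * C₂ + C₁ * C₃ + C₂ * C₃),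
     1 + x * (x + 2) * (C₁ * C₂ * C₃),
     fun z => by unfold salQ; ring⟩
  have q1 : α * C₁ ^ 2 + β * C₁ + γ = 0 := by
    have h := hexp C₁; rw [hC₁] at h; linear_combination -h
  have q2 : α * C₂ ^ 2 + β * C₂ + γ = 0 := by
    have h := hexp C₂; rw [hC₂] at h; linear_combination -h
  have q3 : α * C₃ ^ 2 + β * C₃ + γ = 0 := by
    have h := hexp C₃; rw [hC₃] at h; linear_combination -h
  have hα : α = 0 := by
    have key : α * ((C₁ - C₂) * ((C₁ - C₃) * (C₂ - C₃))) = 0 := by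
      linear_combination (C₂ - C₃) * q1 - (C₁ - C₃) * q2 + (C₁ - C₂) * q3
    rcases mul_eq_zero.mp key with h | h
    · exact h
    · exact absurd h (by simp [hne12, hne13, hne23])
  have hβ : β = 0 := by
    have key : β * (C₁ - C₂) = 0 := by
      linear_combination q1 - q2 - (C₁ ^ 2 - C₂ ^ 2) * hα
    exact (mul_eq_zero.mp key).resolve_right hne12
  have hγ : γ = 0 := by linear_combination q1 - C₁ ^ 2 * hα - C₁ * hβ
  have hfact : ∀ z : ℝ, salQ x z = x * (x + 2) * ((z - C₁) * ((z - C₂) * (z - C₃))) := by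
    intro z
    have h := hexp z
    rw [hα, hβ, hγ] at h
    linarith [h]
  have hLpos : (0:ℝ) < x * (x + 2) := by nlinarith
  refine ⟨C₁, C₂, C₃, h32, h21, ?_, ?_, ?_, ?_, h3l, h3r, h2l, h2r, h1l, ?_⟩
  · rw [salP_eq_salQ]; exact hC₁
  · rw [salP_eq_salQ]; exact hC₂
  · rw [salP_eq_salQ]; exact hC₃
  · intro z hz
    rw [salP_eq_salQ] at hz
    rw [hfact z] at hz
    rcases mul_eq_zero.mp hz with h | h
    · exact absurd h (ne_of_gt hLpos)
    · rcases mul_eq_zero.mp h with h | h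
      · exact Or.inl (sub_eq_zero.mp h)
      · rcases mul_eq_zero.mp h with h | h
        · exact Or.inr (Or.inl (sub_eq_zero.mp h))
        · exact Or.inr (Or.inr (sub_eq_zero.mp h))
  · intro h2a
    have hx2 : (2:ℝ) ≤ x := by rw [hxdef]; exact_mod_cast h2a
    have hPt := lem5 hx2
    set t : ℝ := 1 / (4 * x ^ 2 * (x + 2) ^ 2) with htdef
    have ht0 : 0 < t := one_div_pos.mpr hd
    have ht1 : t ≤ 1 := by
      rw [htdef, div_le_one hd]; nlinarith
    have ht1' : t < C₁ := by linarith
    have ht3 : 0 < t - C₃ := by linarith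
    have h2t : t < C₂ := by
      by_contra hc
      push_neg at hc
      have p1 : 0 ≤ (t - C₂) * (t - C₃) := mul_nonneg (by linarith) ht3.le
      have p2 : (t - C₁) * ((t - C₂) * (t - C₃)) ≤ 0 :=
        mul_nonpos_of_nonpos_of_nonneg (by linarith) p1
      have p3 : x * (x + 2) * ((t - C₁) * ((t - C₂) * (t - C₃))) ≤ 0 :=
        mul_nonpos_of_nonneg_of_nonpos hLpos.le p2
      rw [hfact t] at hPt
      linarith
    refine ⟨h2t, abs_lt.mpr ⟨by linarith, by linarith⟩⟩
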